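/- In HA+NEM, if u is reducible of type A₀ and v is reducible of type A₁, then π_i⟨u,v⟩ is reducible of type A_i, for i = 0,1. -/
import Mathlib


/-! ### First-order arithmetic terms of the language L -/

inductive Trm : Type
  | var  : ℕ → Trm
  | zero : Trm
  | succ : Trm → Trm

/-- The numeral `S … S 0`. -/
def Trm.num : ℕ → Trm
  | 0 => .zero
  | n + 1 => .succ (Trm.num n)

def Trm.eval (ρ : ℕ → ℕ) : Trm → ℕ
  | .var α => ρ α
  | .zero => 0
  | .succ t => Trm.eval ρ t + 1

/-- Substitution `t[m/α]` in first-order terms. -/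
def Trm.subst (α : ℕ) (m : Trm) : Trm → Trm
  | .var β => if β = α then m else .var β
  | .zero => .zero
  | .succ t => .succ (Trm.subst α m t)

def Trm.fv : Trm → Set ℕ
  | .var α => {α}
  | .zero => ∅
  | .succ t => Trm.fv t

/-- A symbol for a primitive recursive (decidable) relation on ℕ,
    given by its boolean interpretation. -/
structure PredSym where
  interp : List ℕ → Bool

/-- `¬P`, the atomic predicate equivalent to the boolean negation of `P`. -/
def PredSym.not (P : PredSym) : PredSym := ⟨fun l => ! P.interp l⟩

/-- The atomic formula `P(t₁,…,tₙ)` is true (under every environment;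
    for closed instances this is ordinary truth). -/
def atomTrue (P : PredSym) (args : List Trm) : Prop :=
  ∀ ρ : ℕ → ℕ, P.interp (args.map (Trm.eval ρ)) = true

def atomFalse (P : PredSym) (args : List Trm) : Prop :=
  ∀ ρ : ℕ → ℕ, P.interp (args.map (Trm.eval ρ)) = false

/-! ### Formulas of HA -/

inductive Formula : Type
  | atom : PredSym → List Trm → Formula
  | and  : Formula → Formula → Formula
  | or   : Formula → Formula → Formula
  | imp  : Formula → Formula → Formula
  | all  : ℕ → Formula → Formula
  | ex   : ℕ → Formula → Formula

/-- Substitution `A[m/α]` in formulas. -/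
def Formula.subst (α : ℕ) (m : Trm) : Formula → Formula
  | .atom P args => .atom P (args.map (Trm.subst α m))
  | .and A B => .and (A.subst α m) (B.subst α m)
  | .or A B => .or (A.subst α m) (B.subst α m)
  | .imp A B => .imp (A.subst α m) (B.subst α m)
  | .all β A => if β = α then .all β A else .all β (A.subst α m)
  | .ex β A => if β = α then .ex β A else .ex β (A.subst α m)

/-- Free first-order variables of a formula. -/
def Formula.fv : Formula → Set ℕ
  | .atom _ args => {β | ∃ t ∈ args, β ∈ t.fv}
  | .and A B => A.fv ∪ B.fv
  | .or A B => A.fv ∪ B.fv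
  | .imp A B => A.fv ∪ B.fv
  | .all β A => A.fv \ {β}
  | .ex β A => A.fv \ {β}

def Formula.size : Formula → ℕ
  | .atom _ _ => 1
  | .and A B => A.size + B.size + 1
  | .or A B => A.size + B.size + 1
  | .imp A B => A.size + B.size + 1
  | .all _ A => A.size + 1
  | .ex _ A => A.size + 1

theorem Formula.size_subst (α : ℕ) (m : Trm) (A : Formula) :
    (A.subst α m).size = A.size := by
  induction A with
  | atom P args => simp [Formula.subst, Formula.size]
  | and A B ihA ihB => simp [Formula.subst, Formula.size, ihA, ihB]
  | or A B ihA ihB => simp [Formula.subst, Formula.size, ihA, ihB]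
  | imp A B ihA ihB => simp [Formula.subst, Formula.size, ihA, ihB]
  | all β A ih => by_cases h : β = α <;> simp [Formula.subst, Formula.size, h, ih]
  | ex β A ih => by_cases h : β = α <;> simp [Formula.subst, Formula.size, h, ih]
/-! ### Proof terms of HA + NEM -/

inductive PTm : Type
  | var     : ℕ → PTm                          -- x
  | app     : PTm → PTm → PTm                  -- t u
  | tapp    : PTm → Trm → PTm                  -- t m
  | lam     : ℕ → PTm → PTm                    -- λx u
  | tlam    : ℕ → PTm → PTm                    -- λα u
  | pair    : PTm → PTm → PTm                  -- ⟨t,u⟩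
  | proj    : Bool → PTm → PTm                 -- π₀ u / π₁ u
  | inj     : Bool → PTm → PTm                 -- ι₀(u) / ι₁(u)
  | case    : PTm → ℕ → PTm → ℕ → PTm → PTm    -- t[x.u, y.v]
  | exIntro : Trm → PTm → PTm                  -- (m, t)
  | exElim  : PTm → ℕ → ℕ → PTm → PTm          -- t[(α,x).u]
  | em      : PTm → PTm → PTm                  -- E(u,v)
  | hyp     : PredSym → List Trm → ℕ → PTm     -- HYP_P^α
  | wit     : PredSym → List Trm → ℕ → PTm     -- WIT_P^α
  | tt      : PTm                              -- True
  | natrec  : PTm → PTm → Trm → PTm            -- rec u v m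
  | const   : ℕ → PTm                          -- constant r (Post rules)

/-- Substitution `t[s/x]` of a proof term for a proof-term variable. -/
def PTm.psubst (x : ℕ) (s : PTm) : PTm → PTm
  | .var y => if y = x then s else .var y
  | .app t u => .app ((PTm.psubst x s t)) ((PTm.psubst x s u))
  | .tapp t m => .tapp ((PTm.psubst x s t)) m
  | .lam y u => if y = x then .lam y u else .lam y ((PTm.psubst x s u))
  | .tlam α u => .tlam α ((PTm.psubst x s u))
  | .pair t u => .pair ((PTm.psubst x s t)) ((PTm.psubst x s u))
  | .proj i u => .proj i ((PTm.psubst x s u))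
  | .inj i u => .inj i ((PTm.psubst x s u))
  | .case t y u z v =>
      .case ((PTm.psubst x s t)) y (if y = x then u else (PTm.psubst x s u))
        z (if z = x then v else (PTm.psubst x s v))
  | .exIntro m t => .exIntro m ((PTm.psubst x s t))
  | .exElim t α y u => .exElim ((PTm.psubst x s t)) α y (if y = x then u else (PTm.psubst x s u))
  | .em u v => .em ((PTm.psubst x s u)) ((PTm.psubst x s v))
  | .hyp P args α => .hyp P args α
  | .wit P args α => .wit P args α
  | .tt => .tt
  | .natrec u v m => .natrec ((PTm.psubst x s u)) ((PTm.psubst x s v)) m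
  | .const r => .const r

/-- Substitution `t[m/α]` of a first-order term for a first-order variable in a proof term. -/
def PTm.tsubst (α : ℕ) (m : Trm) : PTm → PTm
  | .var y => .var y
  | .app t u => .app ((PTm.tsubst α m t)) ((PTm.tsubst α m u))
  | .tapp t n => .tapp ((PTm.tsubst α m t)) (n.subst α m)
  | .lam y u => .lam y ((PTm.tsubst α m u))
  | .tlam β u => if β = α then .tlam β u else .tlam β ((PTm.tsubst α m u))
  | .pair t u => .pair ((PTm.tsubst α m t)) ((PTm.tsubst α m u))
  | .proj i u => .proj i ((PTm.tsubst α m u))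
  | .inj i u => .inj i ((PTm.tsubst α m u))
  | .case t y u z v => .case ((PTm.tsubst α m t)) y ((PTm.tsubst α m u)) z ((PTm.tsubst α m v))
  | .exIntro n t => .exIntro (n.subst α m) ((PTm.tsubst α m t))
  | .exElim t β y u =>
      .exElim ((PTm.tsubst α m t)) β y (if β = α then u else (PTm.tsubst α m u))
  | .em u v => .em ((PTm.tsubst α m u)) ((PTm.tsubst α m v))
  | .hyp P args β => if β = α then .hyp P args β else .hyp P (args.map (Trm.subst α m)) β
  | .wit P args β => if β = α then .wit P args β else .wit P (args.map (Trm.subst α m)) β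
  | .tt => .tt
  | .natrec u v n => .natrec ((PTm.tsubst α m u)) ((PTm.tsubst α m v)) (n.subst α m)
  | .const r => .const r

/-! ### The one-step reduction ≻ of HA + NEM -/

inductive NStep : PTm → PTm → Prop
  -- Reduction rules for HA
  | beta (x : ℕ) (u t : PTm) : NStep (.app (.lam x u) t) (PTm.psubst x t u)
  | tbeta (α : ℕ) (u : PTm) (m : Trm) : NStep (.tapp (.tlam α u) m) (PTm.tsubst α m u)
  | projPair (i : Bool) (u₀ u₁ : PTm) :
      NStep (.proj i (.pair u₀ u₁)) (if i then u₁ else u₀)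
  | caseInj₀ (u : PTm) (x₀ : ℕ) (t₀ : PTm) (x₁ : ℕ) (t₁ : PTm) :
      NStep (.case (.inj false u) x₀ t₀ x₁ t₁) (PTm.psubst x₀ u t₀)
  | caseInj₁ (u : PTm) (x₀ : ℕ) (t₀ : PTm) (x₁ : ℕ) (t₁ : PTm) :
      NStep (.case (.inj true u) x₀ t₀ x₁ t₁) (PTm.psubst x₁ u t₁)
  | exIE (n : ℕ) (u : PTm) (α x : ℕ) (v : PTm) :
      NStep (.exElim (.exIntro (Trm.num n) u) α x v) (PTm.psubst x u (PTm.tsubst α (Trm.num n) v))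
  | recZero (u v : PTm) : NStep (.natrec u v .zero) u
  | recSucc (u v : PTm) (n : ℕ) :
      NStep (.natrec u v (.succ (Trm.num n)))
            (.app (.tapp v (Trm.num n)) (.natrec u v (Trm.num n)))
  -- Permutation rules for NEM
  | permApp (u v w : PTm) : NStep (.app (.em u v) w) (.em (.app u w) (.app v w))
  | permTapp (u v : PTm) (m : Trm) : NStep (.tapp (.em u v) m) (.em (.tapp u m) (.tapp v m))
  | permProj (i : Bool) (u v : PTm) : NStep (.proj i (.em u v)) (.em (.proj i u) (.proj i v))
  | permCase (u v : PTm) (x : ℕ) (w₁ : PTm) (y : ℕ) (w₂ : PTm) :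
      NStep (.case (.em u v) x w₁ y w₂) (.em (.case u x w₁ y w₂) (.case v x w₁ y w₂))
  | permExElim (u v : PTm) (α x : ℕ) (w : PTm) :
      NStep (.exElim (.em u v) α x w) (.em (.exElim u α x w) (.exElim v α x w))
  -- Reduction rules for NEM
  | hypTrue (P : PredSym) (args : List Trm) (α : ℕ) (n : ℕ) :
      atomTrue P (args.map (Trm.subst α (Trm.num n))) →
      NStep (.tapp (.hyp P args α) (Trm.num n)) .tt
  | witIntro (P : PredSym) (args : List Trm) (α : ℕ) (n : ℕ) :
      NStep (.wit P args α) (.exIntro (Trm.num n) .tt)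
  | emL (u v : PTm) : NStep (.em u v) u
  | emR (u v : PTm) : NStep (.em u v) v
  -- Congruence (context closure)
  | congAppL {t t'} (u) : NStep t t' → NStep (.app t u) (.app t' u)
  | congAppR (t) {u u'} : NStep u u' → NStep (.app t u) (.app t u')
  | congTapp {t t'} (m) : NStep t t' → NStep (.tapp t m) (.tapp t' m)
  | congLam (x) {u u'} : NStep u u' → NStep (.lam x u) (.lam x u')
  | congTlam (α) {u u'} : NStep u u' → NStep (.tlam α u) (.tlam α u')
  | congPairL {t t'} (u) : NStep t t' → NStep (.pair t u) (.pair t' u)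
  | congPairR (t) {u u'} : NStep u u' → NStep (.pair t u) (.pair t u')
  | congProj (i) {u u'} : NStep u u' → NStep (.proj i u) (.proj i u')
  | congInj (i) {u u'} : NStep u u' → NStep (.inj i u) (.inj i u')
  | congCaseT {t t'} (x u y v) : NStep t t' → NStep (.case t x u y v) (.case t' x u y v)
  | congCaseL (t x) {u u'} (y v) : NStep u u' → NStep (.case t x u y v) (.case t x u' y v)
  | congCaseR (t x u y) {v v'} : NStep v v' → NStep (.case t x u y v) (.case t x u y v')
  | congExIntro (m) {t t'} : NStep t t' → NStep (.exIntro m t) (.exIntro m t')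
  | congExElimT {t t'} (α x u) : NStep t t' → NStep (.exElim t α x u) (.exElim t' α x u)
  | congExElimU (t α x) {u u'} : NStep u u' → NStep (.exElim t α x u) (.exElim t α x u')
  | congEmL {u u'} (v) : NStep u u' → NStep (.em u v) (.em u' v)
  | congEmR (u) {v v'} : NStep v v' → NStep (.em u v) (.em u v')
  | congRecU {u u'} (v m) : NStep u u' → NStep (.natrec u v m) (.natrec u' v m)
  | congRecV (u) {v v'} (m) : NStep v v' → NStep (.natrec u v m) (.natrec u v' m)

/-- `t ≻* t'`: zero or more reduction steps. -/
abbrev NSteps : PTm → PTm → Prop := Relation.ReflTransGen NStep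

/-- `t` is strongly normalizing w.r.t. ≻ (no infinite reduction sequence from `t`). -/
def NSN (t : PTm) : Prop := Acc (fun a b => NStep b a) t

/-- Neutral proof terms. -/
def Neutral : PTm → Prop
  | .lam _ _ => False
  | .tlam _ _ => False
  | .pair _ _ => False
  | .inj _ _ => False
  | .exIntro _ _ => False
  | .em _ _ => False
  | .hyp _ _ _ => False
  | _ => True

/-! ### Reducibility -/

/-- `Reducible C t`: "t is reducible of type C". -/
def Reducible : Formula → PTm → Prop
  | .atom _ _, t => NSN t
  | .and A B, t => Reducible A (.proj false t) ∧ Reducible B (.proj true t)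
  | .imp A B, t => ∀ u, Reducible A u → Reducible B (.app t u)
  | .or A B, t => NSN t ∧ (∀ u, NSteps t (.inj false u) → Reducible A u)
      ∧ (∀ u, NSteps t (.inj true u) → Reducible B u)
  | .all α A, t => ∀ n : Trm, Reducible (A.subst α n) (.tapp t n)
  | .ex α A, t => NSN t ∧ ∀ (n : Trm) (u : PTm), NSteps t (.exIntro n u) → Reducible (A.subst α n) u
termination_by A _ => A.size
decreasing_by all_goals simp only [Formula.size, Formula.size_subst] <;> omega
/-! ### Typing for HA + NEM -/

/-- A context entry: a proof-term variable declaration `x : A`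
    or an EM₁-hypothesis variable declaration `a : A`. -/
inductive CtxEntry : Type
  | pvar : ℕ → Formula → CtxEntry
  | hvar : ℕ → Formula → CtxEntry

abbrev Ctx : Type := List CtxEntry

def CtxEntry.isPvar : CtxEntry → Prop
  | .pvar _ _ => True
  | .hvar _ _ => False

def CtxEntry.formula : CtxEntry → Formula
  | .pvar _ A => A
  | .hvar _ A => A

def CtxEntry.fv (e : CtxEntry) : Set ℕ := e.formula.fv

/-- The proof term `r u₁ … uₙ` of a Post rule (`True` if `n = 0`). -/
def postTerm (r : ℕ) (us : List PTm) : PTm :=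
  if us.isEmpty then .tt else us.foldl PTm.app (.const r)

/-- The natural deduction system HA + NEM. -/
inductive NDeriv : Ctx → PTm → Formula → Prop
  | var {Γ : Ctx} {x : ℕ} {A : Formula} :
      CtxEntry.pvar x A ∈ Γ → NDeriv Γ (.var x) A
  | hypAx {Γ : Ctx} {a : ℕ} {P : PredSym} {args : List Trm} {α : ℕ} :
      CtxEntry.hvar a (.all α (.atom P args)) ∈ Γ →
      NDeriv Γ (.hyp P args α) (.all α (.atom P args))
  | witAx {Γ : Ctx} {a : ℕ} {P : PredSym} {args : List Trm} {α : ℕ} :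
      CtxEntry.hvar a (.ex α (.atom P.not args)) ∈ Γ →
      NDeriv Γ (.wit P args α) (.ex α (.atom P.not args))
  | andI {Γ u t A B} : NDeriv Γ u A → NDeriv Γ t B → NDeriv Γ (.pair u t) (.and A B)
  | andE₀ {Γ u A B} : NDeriv Γ u (.and A B) → NDeriv Γ (.proj false u) A
  | andE₁ {Γ u A B} : NDeriv Γ u (.and A B) → NDeriv Γ (.proj true u) B
  | impE {Γ t u A B} : NDeriv Γ t (.imp A B) → NDeriv Γ u A → NDeriv Γ (.app t u) B
  | impI {Γ x u A B} : NDeriv (CtxEntry.pvar x A :: Γ) u B → NDeriv Γ (.lam x u) (.imp A B)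
  | orI₀ {Γ u A B} : NDeriv Γ u A → NDeriv Γ (.inj false u) (.or A B)
  | orI₁ {Γ u A B} : NDeriv Γ u B → NDeriv Γ (.inj true u) (.or A B)
  | orE {Γ u x y w₁ w₂ A B C} :
      NDeriv Γ u (.or A B) → NDeriv (CtxEntry.pvar x A :: Γ) w₁ C →
      NDeriv (CtxEntry.pvar y B :: Γ) w₂ C → NDeriv Γ (.case u x w₁ y w₂) C
  | allE {Γ u α A} (m : Trm) : NDeriv Γ u (.all α A) → NDeriv Γ (.tapp u m) (A.subst α m)
  | allI {Γ u α A} :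
      NDeriv Γ u A → (∀ e ∈ Γ, α ∉ CtxEntry.fv e) → NDeriv Γ (.tlam α u) (.all α A)
  | exI {Γ u α A} (m : Trm) : NDeriv Γ u (A.subst α m) → NDeriv Γ (.exIntro m u) (.ex α A)
  | exE {Γ u t α x A C} :
      NDeriv Γ u (.ex α A) → NDeriv (CtxEntry.pvar x A :: Γ) t C →
      α ∉ Formula.fv C → (∀ e ∈ Γ, α ∉ CtxEntry.fv e) →
      NDeriv Γ (.exElim u α x t) C
  | ind {Γ u v α A} (m : Trm) :
      NDeriv Γ u (A.subst α .zero) →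
      NDeriv Γ v (.all α (.imp A (A.subst α (.succ (.var α))))) →
      NDeriv Γ (.natrec u v m) (A.subst α m)
  | post {Γ : Ctx} (r : ℕ) (Ps : List (PredSym × List Trm)) (P : PredSym)
      (args : List Trm) (us : List PTm) :
      (hlen : us.length = Ps.length) →
      (∀ (i : ℕ) (h₁ : i < us.length) (h₂ : i < Ps.length),
        NDeriv Γ (us.get ⟨i, h₁⟩) (.atom (Ps.get ⟨i, h₂⟩).1 (Ps.get ⟨i, h₂⟩).2)) →
      (∀ ρ : ℕ → ℕ, (∀ pa ∈ Ps, pa.1.interp (pa.2.map (Trm.eval ρ)) = true) →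
        P.interp (args.map (Trm.eval ρ)) = true) →
      NDeriv Γ (postTerm r us) (.atom P args)
  | nem {Γ w₁ w₂ C} {a : ℕ} {P : PredSym} {args : List Trm} {α : ℕ} :
      NDeriv (CtxEntry.hvar a (.all α (.atom P args)) :: Γ) w₁ C →
      NDeriv (CtxEntry.hvar a (.ex α (.atom P.not args)) :: Γ) w₂ C →
      NDeriv Γ (.em w₁ w₂) C
/-! ### Proof terms of HA + EM₁ (with hypothesis variables) -/

inductive EPTm : Type
  | var     : ℕ → EPTm
  | app     : EPTm → EPTm → EPTm
  | tapp    : EPTm → Trm → EPTm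
  | lam     : ℕ → EPTm → EPTm
  | tlam    : ℕ → EPTm → EPTm
  | pair    : EPTm → EPTm → EPTm
  | proj    : Bool → EPTm → EPTm
  | inj     : Bool → EPTm → EPTm
  | case    : EPTm → ℕ → EPTm → ℕ → EPTm → EPTm
  | exIntro : Trm → EPTm → EPTm
  | exElim  : EPTm → ℕ → ℕ → EPTm → EPTm
  | em      : ℕ → EPTm → EPTm → EPTm             -- E_a(u,v)
  | hyp     : ℕ → PredSym → List Trm → ℕ → EPTm  -- [a]HYP_P^α
  | wit     : ℕ → PredSym → List Trm → ℕ → EPTm  -- [a]WIT_P^α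
  | tt      : EPTm
  | natrec  : EPTm → EPTm → Trm → EPTm
  | const   : ℕ → EPTm

/-- Substitution `t[s/x]` of a proof term for a proof-term variable. -/
def EPTm.psubst (x : ℕ) (s : EPTm) : EPTm → EPTm
  | .var y => if y = x then s else .var y
  | .app t u => .app (EPTm.psubst x s t) (EPTm.psubst x s u)
  | .tapp t m => .tapp (EPTm.psubst x s t) m
  | .lam y u => if y = x then .lam y u else .lam y (EPTm.psubst x s u)
  | .tlam α u => .tlam α (EPTm.psubst x s u)
  | .pair t u => .pair (EPTm.psubst x s t) (EPTm.psubst x s u)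
  | .proj i u => .proj i (EPTm.psubst x s u)
  | .inj i u => .inj i (EPTm.psubst x s u)
  | .case t y u z v =>
      .case (EPTm.psubst x s t) y (if y = x then u else EPTm.psubst x s u)
        z (if z = x then v else EPTm.psubst x s v)
  | .exIntro m t => .exIntro m (EPTm.psubst x s t)
  | .exElim t α y u => .exElim (EPTm.psubst x s t) α y (if y = x then u else EPTm.psubst x s u)
  | .em a u v => .em a (EPTm.psubst x s u) (EPTm.psubst x s v)
  | .hyp a P args α => .hyp a P args α
  | .wit a P args α => .wit a P args α
  | .tt => .tt
  | .natrec u v m => .natrec (EPTm.psubst x s u) (EPTm.psubst x s v) m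
  | .const r => .const r

/-- Substitution `t[m/α]` of a first-order term in a proof term. -/
def EPTm.tsubst (α : ℕ) (m : Trm) : EPTm → EPTm
  | .var y => .var y
  | .app t u => .app (EPTm.tsubst α m t) (EPTm.tsubst α m u)
  | .tapp t n => .tapp (EPTm.tsubst α m t) (n.subst α m)
  | .lam y u => .lam y (EPTm.tsubst α m u)
  | .tlam β u => if β = α then .tlam β u else .tlam β (EPTm.tsubst α m u)
  | .pair t u => .pair (EPTm.tsubst α m t) (EPTm.tsubst α m u)
  | .proj i u => .proj i (EPTm.tsubst α m u)
  | .inj i u => .inj i (EPTm.tsubst α m u)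
  | .case t y u z v => .case (EPTm.tsubst α m t) y (EPTm.tsubst α m u) z (EPTm.tsubst α m v)
  | .exIntro n t => .exIntro (n.subst α m) (EPTm.tsubst α m t)
  | .exElim t β y u => .exElim (EPTm.tsubst α m t) β y (if β = α then u else EPTm.tsubst α m u)
  | .em a u v => .em a (EPTm.tsubst α m u) (EPTm.tsubst α m v)
  | .hyp a P args β => if β = α then .hyp a P args β else .hyp a P (args.map (Trm.subst α m)) β
  | .wit a P args β => if β = α then .wit a P args β else .wit a P (args.map (Trm.subst α m)) β
  | .tt => .tt
  | .natrec u v n => .natrec (EPTm.tsubst α m u) (EPTm.tsubst α m v) (n.subst α m)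
  | .const r => .const r

/-- `a` occurs free (as a hypothesis variable) in a term;
    `E_a(u,v)` binds `a` in both `u` and `v`. -/
def EPTm.hvFree (a : ℕ) : EPTm → Prop
  | .var _ => False
  | .app t u => EPTm.hvFree a t ∨ EPTm.hvFree a u
  | .tapp t _ => EPTm.hvFree a t
  | .lam _ u => EPTm.hvFree a u
  | .tlam _ u => EPTm.hvFree a u
  | .pair t u => EPTm.hvFree a t ∨ EPTm.hvFree a u
  | .proj _ u => EPTm.hvFree a u
  | .inj _ u => EPTm.hvFree a u
  | .case t _ u _ v => EPTm.hvFree a t ∨ EPTm.hvFree a u ∨ EPTm.hvFree a v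
  | .exIntro _ t => EPTm.hvFree a t
  | .exElim t _ _ u => EPTm.hvFree a t ∨ EPTm.hvFree a u
  | .em b u v => b ≠ a ∧ (EPTm.hvFree a u ∨ EPTm.hvFree a v)
  | .hyp b _ _ _ => b = a
  | .wit b _ _ _ => b = a
  | .tt => False
  | .natrec u v _ => EPTm.hvFree a u ∨ EPTm.hvFree a v
  | .const _ => False

/-- `[a]HYP_P^α n` occurs in the term (at a position where `a` is free). -/
def EPTm.occHypApp (a : ℕ) (P : PredSym) (args : List Trm) (β : ℕ) (n : ℕ) : EPTm → Prop
  | .var _ => False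
  | .app t u => EPTm.occHypApp a P args β n t ∨ EPTm.occHypApp a P args β n u
  | .tapp t m => (t = .hyp a P args β ∧ m = Trm.num n) ∨ EPTm.occHypApp a P args β n t
  | .lam _ u => EPTm.occHypApp a P args β n u
  | .tlam _ u => EPTm.occHypApp a P args β n u
  | .pair t u => EPTm.occHypApp a P args β n t ∨ EPTm.occHypApp a P args β n u
  | .proj _ u => EPTm.occHypApp a P args β n u
  | .inj _ u => EPTm.occHypApp a P args β n u
  | .case t _ u _ v =>
      EPTm.occHypApp a P args β n t ∨ EPTm.occHypApp a P args β n u ∨ EPTm.occHypApp a P args β n v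
  | .exIntro _ t => EPTm.occHypApp a P args β n t
  | .exElim t _ _ u => EPTm.occHypApp a P args β n t ∨ EPTm.occHypApp a P args β n u
  | .em b u v => b ≠ a ∧ (EPTm.occHypApp a P args β n u ∨ EPTm.occHypApp a P args β n v)
  | .hyp _ _ _ _ => False
  | .wit _ _ _ _ => False
  | .tt => False
  | .natrec u v _ => EPTm.occHypApp a P args β n u ∨ EPTm.occHypApp a P args β n v
  | .const _ => False

/-- `v[a := n]`: replace each subterm `[a]WIT_P^α` corresponding to a free
    occurrence of `a` by `(n, True)`. -/
def EPTm.witElim (a : ℕ) (n : ℕ) : EPTm → EPTm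
  | .var y => .var y
  | .app t u => .app (EPTm.witElim a n t) (EPTm.witElim a n u)
  | .tapp t m => .tapp (EPTm.witElim a n t) m
  | .lam y u => .lam y (EPTm.witElim a n u)
  | .tlam β u => .tlam β (EPTm.witElim a n u)
  | .pair t u => .pair (EPTm.witElim a n t) (EPTm.witElim a n u)
  | .proj i u => .proj i (EPTm.witElim a n u)
  | .inj i u => .inj i (EPTm.witElim a n u)
  | .case t y u z v => .case (EPTm.witElim a n t) y (EPTm.witElim a n u) z (EPTm.witElim a n v)
  | .exIntro m t => .exIntro m (EPTm.witElim a n t)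
  | .exElim t β y u => .exElim (EPTm.witElim a n t) β y (EPTm.witElim a n u)
  | .em b u v => if b = a then .em b u v else .em b (EPTm.witElim a n u) (EPTm.witElim a n v)
  | .hyp b P args β => .hyp b P args β
  | .wit b P args β => if b = a then .exIntro (Trm.num n) .tt else .wit b P args β
  | .tt => .tt
  | .natrec u v m => .natrec (EPTm.witElim a n u) (EPTm.witElim a n v) m
  | .const r => .const r

/-! ### The one-step reduction ↦ of HA + EM₁ -/

inductive EStep : EPTm → EPTm → Prop
  -- Reduction rules for HA
  | beta (x : ℕ) (u t : EPTm) : EStep (.app (.lam x u) t) (EPTm.psubst x t u)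
  | tbeta (α : ℕ) (u : EPTm) (m : Trm) : EStep (.tapp (.tlam α u) m) (EPTm.tsubst α m u)
  | projPair (i : Bool) (u₀ u₁ : EPTm) :
      EStep (.proj i (.pair u₀ u₁)) (if i then u₁ else u₀)
  | caseInj₀ (u : EPTm) (x₀ : ℕ) (t₀ : EPTm) (x₁ : ℕ) (t₁ : EPTm) :
      EStep (.case (.inj false u) x₀ t₀ x₁ t₁) (EPTm.psubst x₀ u t₀)
  | caseInj₁ (u : EPTm) (x₀ : ℕ) (t₀ : EPTm) (x₁ : ℕ) (t₁ : EPTm) :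
      EStep (.case (.inj true u) x₀ t₀ x₁ t₁) (EPTm.psubst x₁ u t₁)
  | exIE (n : ℕ) (u : EPTm) (α x : ℕ) (v : EPTm) :
      EStep (.exElim (.exIntro (Trm.num n) u) α x v)
            (EPTm.psubst x u (EPTm.tsubst α (Trm.num n) v))
  | recZero (u v : EPTm) : EStep (.natrec u v .zero) u
  | recSucc (u v : EPTm) (n : ℕ) :
      EStep (.natrec u v (.succ (Trm.num n)))
            (.app (.tapp v (Trm.num n)) (.natrec u v (Trm.num n)))
  -- Permutation rules for EM₁
  | permApp (a : ℕ) (u v w : EPTm) : EStep (.app (.em a u v) w) (.em a (.app u w) (.app v w))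
  | permTapp (a : ℕ) (u v : EPTm) (m : Trm) :
      EStep (.tapp (.em a u v) m) (.em a (.tapp u m) (.tapp v m))
  | permProj (a : ℕ) (i : Bool) (u v : EPTm) :
      EStep (.proj i (.em a u v)) (.em a (.proj i u) (.proj i v))
  | permCase (a : ℕ) (u v : EPTm) (x : ℕ) (w₁ : EPTm) (y : ℕ) (w₂ : EPTm) :
      EStep (.case (.em a u v) x w₁ y w₂) (.em a (.case u x w₁ y w₂) (.case v x w₁ y w₂))
  | permExElim (a : ℕ) (u v : EPTm) (α x : ℕ) (w : EPTm) :
      EStep (.exElim (.em a u v) α x w) (.em a (.exElim u α x w) (.exElim v α x w))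
  -- Reduction rules for EM₁
  | hypTrue (a : ℕ) (P : PredSym) (args : List Trm) (α : ℕ) (n : ℕ) :
      atomTrue P (args.map (Trm.subst α (Trm.num n))) →
      EStep (.tapp (.hyp a P args α) (Trm.num n)) .tt
  | emSimp (a : ℕ) (u v : EPTm) : ¬ EPTm.hvFree a u → EStep (.em a u v) u
  | emRaise (a : ℕ) (u v : EPTm) (P : PredSym) (args : List Trm) (α : ℕ) (n : ℕ) :
      EPTm.occHypApp a P args α n u →
      atomFalse P (args.map (Trm.subst α (Trm.num n))) →
      EStep (.em a u v) (EPTm.witElim a n v)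
  -- Congruence (context closure)
  | congAppL {t t'} (u) : EStep t t' → EStep (.app t u) (.app t' u)
  | congAppR (t) {u u'} : EStep u u' → EStep (.app t u) (.app t u')
  | congTapp {t t'} (m) : EStep t t' → EStep (.tapp t m) (.tapp t' m)
  | congLam (x) {u u'} : EStep u u' → EStep (.lam x u) (.lam x u')
  | congTlam (α) {u u'} : EStep u u' → EStep (.tlam α u) (.tlam α u')
  | congPairL {t t'} (u) : EStep t t' → EStep (.pair t u) (.pair t' u)
  | congPairR (t) {u u'} : EStep u u' → EStep (.pair t u) (.pair t u')
  | congProj (i) {u u'} : EStep u u' → EStep (.proj i u) (.proj i u')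
  | congInj (i) {u u'} : EStep u u' → EStep (.inj i u) (.inj i u')
  | congCaseT {t t'} (x u y v) : EStep t t' → EStep (.case t x u y v) (.case t' x u y v)
  | congCaseL (t x) {u u'} (y v) : EStep u u' → EStep (.case t x u y v) (.case t x u' y v)
  | congCaseR (t x u y) {v v'} : EStep v v' → EStep (.case t x u y v) (.case t x u y v')
  | congExIntro (m) {t t'} : EStep t t' → EStep (.exIntro m t) (.exIntro m t')
  | congExElimT {t t'} (α x u) : EStep t t' → EStep (.exElim t α x u) (.exElim t' α x u)
  | congExElimU (t α x) {u u'} : EStep u u' → EStep (.exElim t α x u) (.exElim t α x u')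
  | congEmL (a) {u u'} (v) : EStep u u' → EStep (.em a u v) (.em a u' v)
  | congEmR (a u) {v v'} : EStep v v' → EStep (.em a u v) (.em a u v')
  | congRecU {u u'} (v m) : EStep u u' → EStep (.natrec u v m) (.natrec u' v m)
  | congRecV (u) {v v'} (m) : EStep v v' → EStep (.natrec u v m) (.natrec u v' m)

/-- `t` is strongly normalizing w.r.t. ↦. -/
def ESN (t : EPTm) : Prop := Acc (fun a b => EStep b a) t

/-- The translation ⟨·⟩ from HA + EM₁ proof terms to HA + NEM proof terms:
    erase every `[a]` and replace each `E_a` by `E`. -/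
def EPTm.transl : EPTm → PTm
  | .var x => .var x
  | .app t u => .app (EPTm.transl t) (EPTm.transl u)
  | .tapp t m => .tapp (EPTm.transl t) m
  | .lam x u => .lam x (EPTm.transl u)
  | .tlam α u => .tlam α (EPTm.transl u)
  | .pair t u => .pair (EPTm.transl t) (EPTm.transl u)
  | .proj i u => .proj i (EPTm.transl u)
  | .inj i u => .inj i (EPTm.transl u)
  | .case t x u y v => .case (EPTm.transl t) x (EPTm.transl u) y (EPTm.transl v)
  | .exIntro m t => .exIntro m (EPTm.transl t)
  | .exElim t α x u => .exElim (EPTm.transl t) α x (EPTm.transl u)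
  | .em _ u v => .em (EPTm.transl u) (EPTm.transl v)
  | .hyp _ P args α => .hyp P args α
  | .wit _ P args α => .wit P args α
  | .tt => .tt
  | .natrec u v m => .natrec (EPTm.transl u) (EPTm.transl v) m
  | .const r => .const r

/-- The proof term `r u₁ … uₙ` of a Post rule in HA + EM₁. -/
def epostTerm (r : ℕ) (us : List EPTm) : EPTm :=
  if us.isEmpty then .tt else us.foldl EPTm.app (.const r)

/-- The natural deduction system HA + EM₁. -/
inductive EDeriv : Ctx → EPTm → Formula → Prop
  | var {Γ : Ctx} {x : ℕ} {A : Formula} :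
      CtxEntry.pvar x A ∈ Γ → EDeriv Γ (.var x) A
  | hypAx {Γ : Ctx} {a : ℕ} {P : PredSym} {args : List Trm} {α : ℕ} :
      CtxEntry.hvar a (.all α (.atom P args)) ∈ Γ →
      EDeriv Γ (.hyp a P args α) (.all α (.atom P args))
  | witAx {Γ : Ctx} {a : ℕ} {P : PredSym} {args : List Trm} {α : ℕ} :
      CtxEntry.hvar a (.ex α (.atom P.not args)) ∈ Γ →
      EDeriv Γ (.wit a P args α) (.ex α (.atom P.not args))
  | andI {Γ u t A B} : EDeriv Γ u A → EDeriv Γ t B → EDeriv Γ (.pair u t) (.and A B)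
  | andE₀ {Γ u A B} : EDeriv Γ u (.and A B) → EDeriv Γ (.proj false u) A
  | andE₁ {Γ u A B} : EDeriv Γ u (.and A B) → EDeriv Γ (.proj true u) B
  | impE {Γ t u A B} : EDeriv Γ t (.imp A B) → EDeriv Γ u A → EDeriv Γ (.app t u) B
  | impI {Γ x u A B} : EDeriv (CtxEntry.pvar x A :: Γ) u B → EDeriv Γ (.lam x u) (.imp A B)
  | orI₀ {Γ u A B} : EDeriv Γ u A → EDeriv Γ (.inj false u) (.or A B)
  | orI₁ {Γ u A B} : EDeriv Γ u B → EDeriv Γ (.inj true u) (.or A B)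
  | orE {Γ u x y w₁ w₂ A B C} :
      EDeriv Γ u (.or A B) → EDeriv (CtxEntry.pvar x A :: Γ) w₁ C →
      EDeriv (CtxEntry.pvar y B :: Γ) w₂ C → EDeriv Γ (.case u x w₁ y w₂) C
  | allE {Γ u α A} (m : Trm) : EDeriv Γ u (.all α A) → EDeriv Γ (.tapp u m) (A.subst α m)
  | allI {Γ u α A} :
      EDeriv Γ u A → (∀ e ∈ Γ, α ∉ CtxEntry.fv e) → EDeriv Γ (.tlam α u) (.all α A)
  | exI {Γ u α A} (m : Trm) : EDeriv Γ u (A.subst α m) → EDeriv Γ (.exIntro m u) (.ex α A)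
  | exE {Γ u t α x A C} :
      EDeriv Γ u (.ex α A) → EDeriv (CtxEntry.pvar x A :: Γ) t C →
      α ∉ Formula.fv C → (∀ e ∈ Γ, α ∉ CtxEntry.fv e) →
      EDeriv Γ (.exElim u α x t) C
  | ind {Γ u v α A} (m : Trm) :
      EDeriv Γ u (A.subst α .zero) →
      EDeriv Γ v (.all α (.imp A (A.subst α (.succ (.var α))))) →
      EDeriv Γ (.natrec u v m) (A.subst α m)
  | post {Γ : Ctx} (r : ℕ) (Ps : List (PredSym × List Trm)) (P : PredSym)
      (args : List Trm) (us : List EPTm) :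
      (hlen : us.length = Ps.length) →
      (∀ (i : ℕ) (h₁ : i < us.length) (h₂ : i < Ps.length),
        EDeriv Γ (us.get ⟨i, h₁⟩) (.atom (Ps.get ⟨i, h₂⟩).1 (Ps.get ⟨i, h₂⟩).2)) →
      (∀ ρ : ℕ → ℕ, (∀ pa ∈ Ps, pa.1.interp (pa.2.map (Trm.eval ρ)) = true) →
        P.interp (args.map (Trm.eval ρ)) = true) →
      EDeriv Γ (epostTerm r us) (.atom P args)
  | em₁ {Γ w₁ w₂ C} {a : ℕ} {P : PredSym} {args : List Trm} {α : ℕ} :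
      EDeriv (CtxEntry.hvar a (.all α (.atom P args)) :: Γ) w₁ C →
      EDeriv (CtxEntry.hvar a (.ex α (.atom P.not args)) :: Γ) w₂ C →
      EDeriv Γ (.em a w₁ w₂) C

/-! ### Auxiliary lemmas: reducibility candidates properties -/

theorem Formula.size_pos (A : Formula) : 1 ≤ A.size := by
  cases A <;> simp [Formula.size]

theorem nsn_of_image (f : PTm → PTm) (hf : ∀ {a b : PTm}, NStep a b → NStep (f a) (f b)) :
    ∀ {t : PTm}, NSN (f t) → NSN t := by
  suffices H : ∀ s, NSN s → ∀ t, f t = s → NSN t by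
    intro t h; exact H _ h t rfl
  intro s hs
  induction hs with
  | intro x _ ih =>
    intro t ht
    exact Acc.intro t fun t' h' => ih (f t') (ht ▸ hf h') t' rfl

def CR1 (A : Formula) : Prop := ∀ t, Reducible A t → NSN t
def CR2 (A : Formula) : Prop := ∀ t t', Reducible A t → NStep t t' → Reducible A t'
def CR3 (A : Formula) : Prop :=
  ∀ t, Neutral t → (∀ t', NStep t t' → Reducible A t') → Reducible A t

theorem cr2_aux : ∀ k A, Formula.size A ≤ k → CR2 A := by
  intro k
  induction k with
  | zero => intro A hA; have := Formula.size_pos A; omega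
  | succ k ih =>
    intro A hA
    cases A with
    | atom P args =>
      intro t t' h s
      simp only [Reducible] at *
      exact h.inv s
    | and A B =>
      have pA := Formula.size_pos A; have pB := Formula.size_pos B
      simp only [Formula.size] at hA
      intro t t' h s
      simp only [Reducible] at h ⊢
      exact ⟨ih A (by omega) _ _ h.1 (.congProj false s),
             ih B (by omega) _ _ h.2 (.congProj true s)⟩
    | imp A B =>
      have pA := Formula.size_pos A; have pB := Formula.size_pos B
      simp only [Formula.size] at hA
      intro t t' h s
      simp only [Reducible] at h ⊢
      intro u hu
      exact ih B (by omega) _ _ (h u hu) (.congAppL u s)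
    | or A B =>
      have pA := Formula.size_pos A; have pB := Formula.size_pos B
      simp only [Formula.size] at hA
      intro t t' h s
      simp only [Reducible] at h ⊢
      obtain ⟨hsn, h0, h1⟩ := h
      exact ⟨hsn.inv s, fun u hst => h0 u (.head s hst), fun u hst => h1 u (.head s hst)⟩
    | all α A =>
      simp only [Formula.size] at hA
      intro t t' h s
      simp only [Reducible] at h ⊢
      intro n
      exact ih (A.subst α n) (by rw [Formula.size_subst]; omega) _ _ (h n) (.congTapp n s)
    | ex α A =>
      simp only [Formula.size] at hA
      intro t t' h s
      simp only [Reducible] at h ⊢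
      obtain ⟨hsn, h0⟩ := h
      exact ⟨hsn.inv s, fun n u hst => h0 n u (.head s hst)⟩

theorem cr2 (A : Formula) : CR2 A := cr2_aux A.size A le_rfl

theorem cr13_aux : ∀ k A, Formula.size A ≤ k → CR1 A ∧ CR3 A := by
  intro k
  induction k with
  | zero => intro A hA; have := Formula.size_pos A; omega
  | succ k ih =>
    intro A hA
    cases A with
    | atom P args =>
      constructor
      · intro t h; simpa only [Reducible] using h
      · intro t _ ht
        simp only [Reducible] at ht ⊢
        exact Acc.intro t fun t' s => ht t' s
    | and A B =>
      have pA := Formula.size_pos A; have pB := Formula.size_pos B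
      simp only [Formula.size] at hA
      obtain ⟨cr1A, cr3A⟩ := ih A (by omega)
      obtain ⟨cr1B, cr3B⟩ := ih B (by omega)
      constructor
      · intro t h
        simp only [Reducible] at h
        exact nsn_of_image (fun s => .proj false s) (fun s => .congProj false s) (cr1A _ h.1)
      · intro t hn ht
        simp only [Reducible]
        constructor
        · apply cr3A (.proj false t) trivial
          intro s hs
          cases hs with
          | projPair => exact hn.elim
          | permProj => exact hn.elim
          | congProj _ hstep =>
            have h' := ht _ hstep
            simp only [Reducible] at h'
            exact h'.1
        · apply cr3B (.proj true t) trivial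
          intro s hs
          cases hs with
          | projPair => exact hn.elim
          | permProj => exact hn.elim
          | congProj _ hstep =>
            have h' := ht _ hstep
            simp only [Reducible] at h'
            exact h'.2
    | imp A B =>
      have pA := Formula.size_pos A; have pB := Formula.size_pos B
      simp only [Formula.size] at hA
      obtain ⟨cr1A, cr3A⟩ := ih A (by omega)
      obtain ⟨cr1B, cr3B⟩ := ih B (by omega)
      constructor
      · intro t h
        simp only [Reducible] at h
        have hvar : Reducible A (.var 0) := cr3A _ trivial (fun t' s => nomatch s)
        exact nsn_of_image (fun s => .app s (.var 0)) (fun s => .congAppL _ s)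
          (cr1B _ (h _ hvar))
      · intro t hn ht
        simp only [Reducible]
        suffices key : ∀ u, NSN u → Reducible A u → Reducible B (.app t u) by
          intro u hu; exact key u (cr1A u hu) hu
        intro u hsn
        induction hsn with
        | intro u hacc ihu =>
          intro hu
          apply cr3B (.app t u) trivial
          intro s hs
          cases hs with
          | beta => exact hn.elim
          | permApp => exact hn.elim
          | congAppL _ hstep =>
            have h' := ht _ hstep
            simp only [Reducible] at h'
            exact h' u hu
          | congAppR _ hstep => exact ihu _ hstep (cr2 A _ _ hu hstep)
    | or A B =>
      have pA := Formula.size_pos A; have pB := Formula.size_pos B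
      simp only [Formula.size] at hA
      obtain ⟨cr1A, cr3A⟩ := ih A (by omega)
      obtain ⟨cr1B, cr3B⟩ := ih B (by omega)
      constructor
      · intro t h
        simp only [Reducible] at h
        exact h.1
      · intro t hn ht
        simp only [Reducible]
        refine ⟨Acc.intro t fun t' s => ?_, ?_, ?_⟩
        · have h' := ht t' s; simp only [Reducible] at h'; exact h'.1
        · intro u hst
          rcases Relation.ReflTransGen.cases_head hst with heq | ⟨t', s, rest⟩
          · cases heq; exact hn.elim
          · have h' := ht t' s; simp only [Reducible] at h'; exact h'.2.1 u rest
        · intro u hst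
          rcases Relation.ReflTransGen.cases_head hst with heq | ⟨t', s, rest⟩
          · cases heq; exact hn.elim
          · have h' := ht t' s; simp only [Reducible] at h'; exact h'.2.2 u rest
    | all α A =>
      simp only [Formula.size] at hA
      constructor
      · intro t h
        simp only [Reducible] at h
        have h0 := h .zero
        have hsn := (ih (A.subst α .zero) (by rw [Formula.size_subst]; omega)).1 _ h0
        exact nsn_of_image (fun s => .tapp s .zero) (fun s => .congTapp _ s) hsn
      · intro t hn ht
        simp only [Reducible]
        intro n
        apply (ih (A.subst α n) (by rw [Formula.size_subst]; omega)).2 (.tapp t n) trivial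
        intro s hs
        cases hs with
        | tbeta => exact hn.elim
        | permTapp => exact hn.elim
        | hypTrue => exact hn.elim
        | congTapp _ hstep =>
          have h' := ht _ hstep
          simp only [Reducible] at h'
          exact h' n
    | ex α A =>
      simp only [Formula.size] at hA
      constructor
      · intro t h
        simp only [Reducible] at h
        exact h.1
      · intro t hn ht
        simp only [Reducible]
        refine ⟨Acc.intro t fun t' s => ?_, ?_⟩
        · have h' := ht t' s; simp only [Reducible] at h'; exact h'.1
        · intro n u hst
          rcases Relation.ReflTransGen.cases_head hst with heq | ⟨t', s, rest⟩
          · cases heq; exact hn.elim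
          · have h' := ht t' s; simp only [Reducible] at h'; exact h'.2 n u rest

theorem cr1 (A : Formula) : CR1 A := (cr13_aux A.size A le_rfl).1
theorem cr3 (A : Formula) : CR3 A := (cr13_aux A.size A le_rfl).2

theorem proj_pair_red (A : Formula) (i : Bool) :
    ∀ u v : PTm, NSN u → NSN v → Reducible A (if i then v else u) →
      Reducible A (.proj i (.pair u v)) := by
  intro u v hu
  induction hu generalizing v with
  | intro u hu' ihu =>
    intro hv
    induction hv with
    | intro v hv' ihv =>
      intro hred
      apply cr3 A (.proj i (.pair u v)) trivial
      intro s hs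
      cases hs with
      | projPair => exact hred
      | congProj _ hstep =>
        cases hstep with
        | congPairL _ h' =>
          apply ihu _ h' _ (Acc.intro v hv')
          cases i with
          | false => exact cr2 A _ _ hred h'
          | true => exact hred
        | congPairR _ h' =>
          apply ihv _ h'
          cases i with
          | false => exact hred
          | true => exact cr2 A _ _ hred h'

/-- if u is reducible of type A₀ and v of type A₁, then
    π_i⟨u,v⟩ is reducible of type A_i, for i = 0,1. -/
theorem proj_pair_reducible (A₀ A₁ : Formula) (u v : PTm)
    (h₀ : Reducible A₀ u) (h₁ : Reducible A₁ v) :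
    Reducible A₀ (.proj false (.pair u v)) ∧ Reducible A₁ (.proj true (.pair u v)) := by
  have hu := cr1 A₀ u h₀
  have hv := cr1 A₁ v h₁
  exact ⟨proj_pair_red A₀ false u v hu hv h₀, proj_pair_red A₁ true u v hu hv h₁⟩
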